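/- (Lemma 1, disturbance estimation error bound.) Let r ≥ 1, 0 ≤ ω_o < 1, T > 0, l_f ≥ 0. Let A_d be the discrete augmented system matrix, C = e_1ᵀ, D = e_{r+1}, and let L ∈ ℝ^{r+1} satisfy: the characteristic polynomial of M := A_d − L C equals (X − ω_o)^{r+1}. Let e : ℕ → ℝ^{r+1} be any sequence with e(0) = 0 and e(k+1) = M e(k) + D Δ(k) for all k, where the scalar sequence Δ satisfies |Δ(k)| ≤ l_f T for all k. Then the last component of the error satisfies |e(k)_{r+1}| ≤ γ(ω_o, T) := (Σ_{k=1}^{∞} p(k)) · l_f · T for every k ∈ ℕ, where p(k) = 1 for 1 ≤ k ≤ r+1 and p(k) = Σ_{i=1}^{r+1} binom(k−1, i−1) (1−ω_o)^{i−1} ω_o^{k−i} for k ≥ r+2. -/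

import Mathlib

open Matrix Polynomial

/-- Discrete augmented system matrix `A_d`. -/
def Ad (r : ℕ) : Matrix (Fin (r + 1)) (Fin (r + 1)) ℝ :=
  fun i j => if ((j : ℕ) = (i : ℕ) + 1) ∨ ((i : ℕ) = r ∧ (j : ℕ) = r) then 1 else 0

/-- `D = e_{r+1} ∈ ℝ^{r+1}`: the last standard basis vector. -/
def Dvec (r : ℕ) : Fin (r + 1) → ℝ := fun i => if (i : ℕ) = r then 1 else 0

/-- The matrix `L C`, whose first column is `L` and whose other columns are zero. -/
def LCmat (r : ℕ) (L : Fin (r + 1) → ℝ) : Matrix (Fin (r + 1)) (Fin (r + 1)) ℝ :=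
  fun i j => if (j : ℕ) = 0 then L i else 0

/-- The sequence `p`: `p(k) = 1` for `1 ≤ k ≤ r+1` and
`p(k) = Σ_{i=1}^{r+1} binom(k−1, i−1) (1−ω)^{i−1} ω^{k−i}` for `k ≥ r+2`. -/
noncomputable def pSeq (r : ℕ) (ω : ℝ) (k : ℕ) : ℝ :=
  if k ≤ r + 1 then 1
  else ∑ i ∈ Finset.Icc 1 (r + 1),
    (Nat.choose (k - 1) (i - 1) : ℝ) * (1 - ω) ^ (i - 1) * ω ^ (k - i)

lemma Ad_mulVec (r : ℕ) (w : Fin (r+1) → ℝ) (x : Fin (r+1)) :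
    (Ad r *ᵥ w) x = if h : (x:ℕ) < r then w ⟨(x:ℕ)+1, by omega⟩ else w x := by
  classical
  unfold Ad mulVec dotProduct
  split
  · rename_i h
    rw [Finset.sum_eq_single (⟨(x:ℕ)+1, by omega⟩ : Fin (r+1))]
    · simp
    · intro y _ hy
      have hcond : ¬(((y:ℕ) = (x:ℕ) + 1) ∨ ((x:ℕ) = r ∧ (y:ℕ) = r)) := by
        push_neg
        refine ⟨fun hc => hy (Fin.ext hc), fun hc => absurd hc (by omega)⟩
      simp [hcond]
    · intro hx; exact absurd (Finset.mem_univ _) hx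
  · rename_i h
    have hx : (x:ℕ) = r := by omega
    rw [Finset.sum_eq_single x]
    · simp [hx]
    · intro y _ hy
      have hcond : ¬(((y:ℕ) = (x:ℕ) + 1) ∨ ((x:ℕ) = r ∧ (y:ℕ) = r)) := by
        push_neg
        constructor
        · intro hc; omega
        · intro _ hyr; exact hy (Fin.ext (by omega))
      simp [hcond]
    · intro hx'; exact absurd (Finset.mem_univ _) hx'

lemma LCmat_mulVec (r : ℕ) (L : Fin (r+1) → ℝ) (w : Fin (r+1) → ℝ) (x : Fin (r+1)) :
    (LCmat r L *ᵥ w) x = L x * w 0 := by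
  classical
  unfold LCmat mulVec dotProduct
  rw [Finset.sum_eq_single (0 : Fin (r+1))]
  · simp
  · intro y _ hy
    have : ¬((y:ℕ) = 0) := fun hc => hy (Fin.ext hc)
    simp [this]
  · intro hx; exact absurd (Finset.mem_univ _) hx

lemma N_mulVec (r : ℕ) (L : Fin (r+1) → ℝ) (ω : ℝ) (w : Fin (r+1) → ℝ) (x : Fin (r+1)) :
    ((Ad r - LCmat r L - ω • 1) *ᵥ w) x
      = (if h : (x:ℕ) < r then w ⟨(x:ℕ)+1, by omega⟩ else w x) - L x * w 0 - ω * w x := by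
  rw [sub_mulVec, sub_mulVec, smul_mulVec, one_mulVec]
  simp [Ad_mulVec, LCmat_mulVec]

lemma Npow_Dvec (r : ℕ) (hr : 1 ≤ r) (L : Fin (r+1) → ℝ) (ω : ℝ) :
    ∀ i, i ≤ r →
      (∀ x : Fin (r+1), (x:ℕ) + i < r → (((Ad r - LCmat r L - ω • 1)^i) *ᵥ Dvec r) x = 0)
      ∧ (((Ad r - LCmat r L - ω • 1)^i) *ᵥ Dvec r) ⟨r, Nat.lt_succ_self r⟩ = (1-ω)^i := by
  intro i
  induction i with
  | zero =>
    intro _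
    rw [pow_zero, one_mulVec]
    constructor
    · intro x hx
      unfold Dvec
      have : ¬((x:ℕ) = r) := by omega
      simp [this]
    · simp [Dvec]
  | succ i ih =>
    intro hi
    have hir : i ≤ r := by omega
    obtain ⟨hsupp, hlast⟩ := ih hir
    set N := Ad r - LCmat r L - ω • 1 with hN
    set w := (N^i) *ᵥ Dvec r with hw
    have hstep : ∀ x, ((N^(i+1)) *ᵥ Dvec r) x
        = (if h : (x:ℕ) < r then w ⟨(x:ℕ)+1, by omega⟩ else w x) - L x * w 0 - ω * w x := by
      intro x
      rw [pow_succ', ← Matrix.mulVec_mulVec, ← hw]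
      exact N_mulVec r L ω w x
    have hw0 : w 0 = 0 := by
      apply hsupp
      simp; omega
    constructor
    · intro x hx
      rw [hstep]
      have hxr : (x:ℕ) < r := by omega
      rw [dif_pos hxr, hw0]
      rw [hsupp ⟨(x:ℕ)+1, by omega⟩ (by simp; omega), hsupp x (by omega)]
      ring
    · rw [hstep]
      have : ¬((⟨r, Nat.lt_succ_self r⟩ : Fin (r+1)) : ℕ) < r := by simp
      rw [dif_neg this, hw0, hlast]
      ring

noncomputable def Sfun (r : ℕ) (ω : ℝ) (m : ℕ) : ℝ :=
  ∑ i ∈ Finset.range (r+1), (m.choose i : ℝ) * ω^(m-i) * (1-ω)^i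

section
variable {n : Type*} [Fintype n] [DecidableEq n]

lemma Mpow_expand (M : Matrix n n ℝ) (ω : ℝ) (m : ℕ) :
    M ^ m = ∑ i ∈ Finset.range (m+1),
      ((m.choose i : ℝ) * ω^(m-i)) • (M - ω • 1)^i := by
  set N := M - ω • (1 : Matrix n n ℝ) with hN
  have hM : M = N + ω • 1 := by rw [hN]; abel
  have hc : Commute N (ω • (1 : Matrix n n ℝ)) := (Commute.one_right N).smul_right ω
  rw [hM, hc.add_pow]
  apply Finset.sum_congr rfl
  intro i hi
  rw [_root_.smul_pow, one_pow]
  rw [show ((m.choose i : ℕ) : Matrix n n ℝ) = (m.choose i : ℝ) • (1 : Matrix n n ℝ) from by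
    rw [Nat.cast_smul_eq_nsmul, nsmul_eq_mul, mul_one]]
  rw [Matrix.mul_smul, mul_one, Matrix.mul_smul, mul_one, smul_smul, mul_comm]
end

lemma sum_mulVec' {n : Type*} [Fintype n] (s : Finset ℕ) (A : ℕ → Matrix n n ℝ) (v : n → ℝ) :
    (∑ i ∈ s, A i) *ᵥ v = ∑ i ∈ s, (A i *ᵥ v) := by
  induction s using Finset.induction with
  | empty => simp [Matrix.zero_mulVec]
  | insert _ _ h ih => rename_i a s; rw [Finset.sum_insert h, Finset.sum_insert h, Matrix.add_mulVec, ih]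

lemma Mpow_last (r : ℕ) (hr : 1 ≤ r) (L : Fin (r+1) → ℝ) (ω : ℝ)
    (hCH : ((Ad r - LCmat r L) - ω • 1)^(r+1) = 0) (m : ℕ) :
    (((Ad r - LCmat r L)^m) *ᵥ Dvec r) ⟨r, Nat.lt_succ_self r⟩ = Sfun r ω m := by
  set N := Ad r - LCmat r L - ω • (1 : Matrix (Fin (r+1)) (Fin (r+1)) ℝ) with hN
  have hzero : ∀ i, r + 1 ≤ i → (N ^ i) = 0 := by
    intro i hi
    have h1 : N ^ i = N ^ (r+1) * N ^ (i - (r+1)) := by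
      rw [← pow_add]; congr 1; omega
    rw [h1, hCH, zero_mul]
  have key : ∀ i, i ≤ r → ((N^i) *ᵥ Dvec r) ⟨r, Nat.lt_succ_self r⟩ = (1-ω)^i :=
    fun i hi => (Npow_Dvec r hr L ω i hi).2
  rw [Mpow_expand (Ad r - LCmat r L) ω m, sum_mulVec']
  have hsmul : ∀ i, ((((m.choose i : ℝ) * ω^(m-i)) • (Ad r - LCmat r L - ω • 1)^i) *ᵥ Dvec r)
      = ((m.choose i : ℝ) * ω^(m-i)) • ((N^i) *ᵥ Dvec r) := by
    intro i; rw [smul_mulVec, hN]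
  simp only [hsmul, Finset.sum_apply, Pi.smul_apply, smul_eq_mul]
  set g : ℕ → ℝ := fun i => (m.choose i : ℝ) * ω^(m-i) * (((N^i) *ᵥ Dvec r) ⟨r, Nat.lt_succ_self r⟩) with hg
  have step1 : ∑ i ∈ Finset.range (m+1), g i = ∑ i ∈ Finset.range (max (m+1) (r+1)), g i := by
    apply Finset.sum_subset
    · intro i hi; simp at hi ⊢; omega
    · intro i _ hi
      simp only [Finset.mem_range, not_lt] at hi
      have : m.choose i = 0 := Nat.choose_eq_zero_of_lt (by omega)
      simp [hg, this]
  have step2 : ∑ i ∈ Finset.range (max (m+1) (r+1)), g i = ∑ i ∈ Finset.range (r+1), g i := by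
    symm
    apply Finset.sum_subset
    · intro i hi; simp at hi ⊢; omega
    · intro i _ hi
      simp only [Finset.mem_range, not_lt] at hi
      have : (N ^ i) = 0 := hzero i (by omega)
      simp [hg, this, Matrix.zero_mulVec]
  calc ∑ i ∈ Finset.range (m+1), g i = ∑ i ∈ Finset.range (r+1), g i := by rw [step1, step2]
    _ = Sfun r ω m := by
      apply Finset.sum_congr rfl
      intro i hi
      simp only [Finset.mem_range] at hi
      rw [hg]; simp only []
      rw [key i (by omega)]

lemma pSeq_eq (r : ℕ) (ω : ℝ) (m : ℕ) : pSeq r ω (m+1) = Sfun r ω m := by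
  unfold pSeq Sfun
  by_cases hm : m + 1 ≤ r + 1
  · rw [if_pos hm]
    symm
    calc ∑ i ∈ Finset.range (r+1), (m.choose i : ℝ) * ω^(m-i) * (1-ω)^i
        = ∑ i ∈ Finset.range (m+1), (m.choose i : ℝ) * ω^(m-i) * (1-ω)^i := by
          symm
          apply Finset.sum_subset
          · intro i hi; simp at hi ⊢; omega
          · intro i _ hi
            simp only [Finset.mem_range, not_lt] at hi
            have : m.choose i = 0 := Nat.choose_eq_zero_of_lt (by omega)
            simp [this]
      _ = ((1-ω) + ω)^m := by
          rw [add_pow]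
          apply Finset.sum_congr rfl
          intro i _
          ring
      _ = 1 := by norm_num
  · rw [if_neg hm]
    have h2 : Finset.Icc 1 (r+1) = Finset.Ico 1 (r+2) := by
      rw [← Finset.Ico_add_one_right_eq_Icc]; rfl
    rw [h2, Finset.sum_Ico_eq_sum_range]
    have h3 : r + 2 - 1 = r + 1 := by omega
    rw [h3]
    apply Finset.sum_congr rfl
    intro i hi
    simp only [Finset.mem_range] at hi
    have e1 : 1 + i - 1 = i := by omega
    have e2 : m + 1 - 1 = m := by omega
    have e3 : m + 1 - (1 + i) = m - i := by omega
    rw [e1, e2, e3]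
    ring

lemma Sfun_nonneg (r : ℕ) (ω : ℝ) (h0 : 0 ≤ ω) (h1 : ω ≤ 1) (m : ℕ) : 0 ≤ Sfun r ω m := by
  unfold Sfun
  apply Finset.sum_nonneg
  intro i _
  have : (0:ℝ) ≤ 1 - ω := by linarith
  positivity

lemma Sfun_summable (r : ℕ) (ω : ℝ) (h0 : 0 ≤ ω) (h1 : ω < 1) :
    Summable (fun m => Sfun r ω m) := by
  rcases eq_or_lt_of_le h0 with h|hpos
  · apply summable_of_ne_finset_zero (s := Finset.range (r+1))
    intro m hm
    simp only [Finset.mem_range, not_lt] at hm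
    unfold Sfun
    apply Finset.sum_eq_zero
    intro i hi
    simp only [Finset.mem_range] at hi
    have : ω ^ (m - i) = 0 := by
      rw [← h, zero_pow]; omega
    simp [this]
  · have hgeo : Summable (fun m : ℕ => (((m:ℝ)+1)^r * ω^m)) := by
      have hrw : ∀ m : ℕ, ((m:ℝ)+1)^r * ω^m
          = ∑ j ∈ Finset.range (r+1), (r.choose j : ℝ) * ((m:ℝ)^j * ω^m) := by
        intro m
        rw [add_pow, Finset.sum_mul]
        apply Finset.sum_congr rfl
        intro j _
        simp; ring
      rw [funext hrw]
      apply summable_sum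
      intro j _
      apply Summable.mul_left
      apply summable_pow_mul_geometric_of_norm_lt_one
      rwa [Real.norm_eq_abs, abs_of_nonneg h0]
    have hb : Summable (fun m : ℕ => ((r:ℝ)+1) * (ω⁻¹^r * (((m:ℝ)+1)^r * ω^m))) :=
      (hgeo.mul_left _).mul_left _
    apply Summable.of_nonneg_of_le (Sfun_nonneg r ω h0 h1.le) _ hb
    intro m
    have hωinv : 1 ≤ ω⁻¹ := by
      nlinarith [mul_inv_cancel₀ (ne_of_gt hpos), inv_nonneg.mpr h0]
    have hbound : ∀ i ∈ Finset.range (r+1),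
        (m.choose i : ℝ) * ω^(m-i) * (1-ω)^i ≤ ((m:ℝ)+1)^r * ω^m * ω⁻¹^r := by
      intro i hi
      simp only [Finset.mem_range] at hi
      by_cases him : i ≤ m
      · have hC : (m.choose i : ℝ) ≤ ((m:ℝ)+1)^r := by
          calc (m.choose i : ℝ) ≤ (m:ℝ)^i := by
                exact_mod_cast Nat.choose_le_pow m i
            _ ≤ ((m:ℝ)+1)^i := by
                apply pow_le_pow_left₀ (Nat.cast_nonneg m) (by linarith)
            _ ≤ ((m:ℝ)+1)^r := by
                have h1m : (1:ℝ) ≤ (m:ℝ)+1 := by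
                  have := Nat.cast_nonneg (α := ℝ) m; linarith
                exact pow_le_pow_right₀ h1m (by omega)
        have hω : ω^(m-i) ≤ ω^m * ω⁻¹^r := by
          have h1' : ω^(m-i) = ω^m * ω⁻¹^i := by
            rw [pow_sub₀ ω (ne_of_gt hpos) him, inv_pow]
          rw [h1']
          apply mul_le_mul_of_nonneg_left _ (by positivity)
          exact pow_le_pow_right₀ hωinv (by omega)
        have h1ω : (1-ω)^i ≤ 1 := pow_le_one₀ (by linarith) (by linarith)
        calc (m.choose i : ℝ) * ω^(m-i) * (1-ω)^i
            ≤ (m.choose i : ℝ) * ω^(m-i) * 1 := by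
              apply mul_le_mul_of_nonneg_left h1ω (by positivity)
          _ = (m.choose i : ℝ) * ω^(m-i) := mul_one _
          _ ≤ ((m:ℝ)+1)^r * (ω^m * ω⁻¹^r) := by
              apply mul_le_mul hC hω (by positivity) (by positivity)
          _ = ((m:ℝ)+1)^r * ω^m * ω⁻¹^r := by ring
      · have : m.choose i = 0 := Nat.choose_eq_zero_of_lt (by omega)
        rw [this]
        simp only [Nat.cast_zero, zero_mul]
        positivity
    calc Sfun r ω m ≤ (Finset.range (r+1)).card • (((m:ℝ)+1)^r * ω^m * ω⁻¹^r) :=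
          Finset.sum_le_card_nsmul _ _ _ hbound
      _ = ((r:ℝ)+1) * (ω⁻¹^r * (((m:ℝ)+1)^r * ω^m)) := by
          rw [Finset.card_range, nsmul_eq_mul]
          push_cast
          ring

lemma mulVec_sum' {n : Type} [Fintype n] (s : Finset ℕ) (A : Matrix n n ℝ) (v : ℕ → n → ℝ) :
    A *ᵥ (∑ i ∈ s, v i) = ∑ i ∈ s, (A *ᵥ v i) := by
  induction s using Finset.induction with
  | empty => simp [Matrix.mulVec_zero]
  | insert _ _ h ih =>
    rename_i a s
    rw [Finset.sum_insert h, Finset.sum_insert h, Matrix.mulVec_add, ih]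

/-- Lemma 1: if the observer gain `L` places all eigenvalues of
`M = A_d − L C` at `ω_o ∈ [0, 1)`, and the error sequence satisfies `e(0) = 0`,
`e(k+1) = M e(k) + D Δ(k)` with `|Δ(k)| ≤ l_f T`, then the disturbance-estimation
error (the last component of `e`) satisfies
`|e(k)_{r+1}| ≤ γ(ω_o, T) = (Σ_{k=1}^∞ p(k)) l_f T` for every `k`. -/
theorem disturbance_estimation_error_bound (r : ℕ) (hr : 1 ≤ r)
    (ωo T lf : ℝ) (hω0 : 0 ≤ ωo) (hω1 : ωo < 1) (hT : 0 < T) (hlf : 0 ≤ lf)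
    (L : Fin (r + 1) → ℝ)
    (hL : (Ad r - LCmat r L).charpoly = (X - C ωo) ^ (r + 1))
    (e : ℕ → Fin (r + 1) → ℝ) (Δ : ℕ → ℝ)
    (he0 : e 0 = 0)
    (herec : ∀ k, e (k + 1) = (Ad r - LCmat r L) *ᵥ (e k) + Δ k • Dvec r)
    (hΔ : ∀ k, |Δ k| ≤ lf * T) :
    ∀ k : ℕ, |e k ⟨r, Nat.lt_succ_self r⟩| ≤ (∑' k : ℕ, pSeq r ωo (k + 1)) * lf * T := by
  set M := Ad r - LCmat r L with hM
  -- Cayley–Hamilton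
  have hCH : (M - ωo • 1)^(r+1) = 0 := by
    have h := Matrix.aeval_self_charpoly M
    rw [hL] at h
    simpa [map_pow, map_sub, aeval_X, aeval_C, Algebra.algebraMap_eq_smul_one] using h
  -- closed form of e
  have heform : ∀ k, e k = ∑ m ∈ Finset.range k, Δ (k - 1 - m) • ((M^m) *ᵥ Dvec r) := by
    intro k
    induction k with
    | zero => simpa using he0
    | succ k ih =>
      rw [herec k, ih, Finset.sum_range_succ']
      have hmv : M *ᵥ (∑ m ∈ Finset.range k, Δ (k - 1 - m) • ((M^m) *ᵥ Dvec r))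
          = ∑ m ∈ Finset.range k, Δ (k - 1 - m) • ((M^(m+1)) *ᵥ Dvec r) := by
        rw [mulVec_sum']
        apply Finset.sum_congr rfl
        intro m _
        rw [Matrix.mulVec_smul, Matrix.mulVec_mulVec, ← pow_succ']
      rw [hmv]
      congr 1
      · apply Finset.sum_congr rfl
        intro m _
        congr 2
        omega
      · rw [pow_zero, one_mulVec]
        norm_num
  intro k
  have hSnn : ∀ m, 0 ≤ Sfun r ωo m := Sfun_nonneg r ωo hω0 hω1.le
  have hsum : Summable (fun m => Sfun r ωo m) := Sfun_summable r ωo hω0 hω1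
  have hlast : e k ⟨r, Nat.lt_succ_self r⟩
      = ∑ m ∈ Finset.range k, Δ (k - 1 - m) * Sfun r ωo m := by
    rw [heform k, Finset.sum_apply]
    apply Finset.sum_congr rfl
    intro m _
    rw [Pi.smul_apply, smul_eq_mul, Mpow_last r hr L ωo hCH m]
  rw [hlast]
  have ht : (∑' k : ℕ, pSeq r ωo (k+1)) = ∑' m, Sfun r ωo m :=
    tsum_congr (fun k => pSeq_eq r ωo k)
  calc |∑ m ∈ Finset.range k, Δ (k - 1 - m) * Sfun r ωo m|
      ≤ ∑ m ∈ Finset.range k, |Δ (k - 1 - m) * Sfun r ωo m| :=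
        Finset.abs_sum_le_sum_abs _ _
    _ = ∑ m ∈ Finset.range k, |Δ (k - 1 - m)| * Sfun r ωo m := by
        apply Finset.sum_congr rfl
        intro m _
        rw [abs_mul, abs_of_nonneg (hSnn m)]
    _ ≤ ∑ m ∈ Finset.range k, (lf * T) * Sfun r ωo m := by
        apply Finset.sum_le_sum
        intro m _
        exact mul_le_mul_of_nonneg_right (hΔ _) (hSnn m)
    _ = (lf * T) * ∑ m ∈ Finset.range k, Sfun r ωo m := by rw [Finset.mul_sum]
    _ ≤ (lf * T) * ∑' m, Sfun r ωo m := by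
        apply mul_le_mul_of_nonneg_left
          (Summable.sum_le_tsum (Finset.range k) (fun m _ => hSnn m) hsum)
        positivity
    _ = (∑' k : ℕ, pSeq r ωo (k + 1)) * lf * T := by rw [ht]; ring
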